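/- arXiv:math/0603702 — 4 statements merged into one kernel-verified Lean document; each statement's English description precedes it below -/
import Mathlib

section
/- For Σ finite and η ∈ M_1^{s,N}(Σ²) (a probability measure on Σ² with equal marginals η̄ and all values N·η(r,s) integers), the total count ∑_{R∈Σ^N} #Sym_N(R,η), where Sym_N(R,η) is the set of permutations σ with #{i : r_i = r, r_{σ(i)} = s} = N η(r,s) for all r,s, equals N! · (∏_{r∈Σ}(N η̄(r))!) / (∏_{r,s∈Σ}(N η(r,s))!). -/
open Finset

section Auxiliary

/-- Permutations intertwining `f` and `g` correspond to families of bijections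
between the fibers of `f` and the fibers of `g`. -/
def permCompEquiv {α γ : Type*} (f g : α → γ) :
    {σ : Equiv.Perm α // ∀ i, g (σ i) = f i} ≃ (∀ c : γ, {i // f i = c} ≃ {i // g i = c}) where
  toFun σ c :=
    { toFun := fun i => ⟨σ.1 i.1, (σ.2 i.1).trans i.2⟩
      invFun := fun j => ⟨σ.1.symm j.1, by
        have h := σ.2 (σ.1.symm j.1)
        rw [Equiv.apply_symm_apply] at h
        rw [← h]; exact j.2⟩
      left_inv := fun i => Subtype.ext (σ.1.symm_apply_apply i.1)
      right_inv := fun j => Subtype.ext (σ.1.apply_symm_apply j.1) }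
  invFun e := ⟨(Equiv.sigmaFiberEquiv f).symm.trans ((Equiv.sigmaCongrRight e).trans
      (Equiv.sigmaFiberEquiv g)),
    fun i => ((e (f i)) ⟨i, rfl⟩).2⟩
  left_inv := fun σ => Subtype.ext (Equiv.ext fun i => rfl)
  right_inv := fun e => by
    funext c
    ext ⟨i, hi⟩
    show ((e (f i)) ⟨i, rfl⟩).1 = ((e c) ⟨i, hi⟩).1
    subst hi; rfl

variable {α γ : Type*} [Fintype α] [DecidableEq α] [Fintype γ] [DecidableEq γ]

theorem card_perm_comp_base (f g : α → γ) :
    Fintype.card {σ : Equiv.Perm α // ∀ i, g (σ i) = f i}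
      = ∏ c : γ, Fintype.card ({i // f i = c} ≃ {i // g i = c}) := by
  rw [Fintype.card_congr (permCompEquiv f g), Fintype.card_pi]

theorem card_perm_comp (f g : α → γ)
    (h : ∀ c, Fintype.card {i // f i = c} = Fintype.card {i // g i = c}) :
    Fintype.card {σ : Equiv.Perm α // ∀ i, g (σ i) = f i}
      = ∏ c : γ, (Fintype.card {i // g i = c}).factorial := by
  rw [card_perm_comp_base]
  exact Finset.prod_congr rfl fun c _ => by
    rw [Fintype.card_equiv (Fintype.equivOfCardEq (h c)), h c]

theorem card_perm_comp_zero (f g : α → γ) (c : γ)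
    (h : Fintype.card {i // f i = c} ≠ Fintype.card {i // g i = c}) :
    Fintype.card {σ : Equiv.Perm α // ∀ i, g (σ i) = f i} = 0 := by
  rw [card_perm_comp_base]
  exact Finset.prod_eq_zero (mem_univ c)
    (Fintype.card_eq_zero_iff.mpr ⟨fun e => h (Fintype.card_congr e)⟩)

theorem exists_fiber_fun (k : γ → ℕ) (hk : ∑ c, k c = Fintype.card α) :
    ∃ F : α → γ, ∀ c, Fintype.card {i // F i = c} = k c := by
  have hcard : Fintype.card α = Fintype.card (Σ c : γ, Fin (k c)) := by
    simp [Fintype.card_sigma, hk]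
  have e := Fintype.equivOfCardEq hcard
  refine ⟨fun i => (e i).1, fun c => ?_⟩
  have e2 : {i // (e i).1 = c} ≃ {x : Σ c : γ, Fin (k c) // x.1 = c} :=
    e.subtypeEquiv fun i => Iff.rfl
  have e3 : {x : Σ c : γ, Fin (k c) // x.1 = c} ≃ Fin (k c) :=
    { toFun := fun x => (x.1.2).cast (by rw [x.2])
      invFun := fun b => ⟨⟨c, b⟩, rfl⟩
      left_inv := by rintro ⟨⟨c', b⟩, h⟩; subst h; rfl
      right_inv := fun b => rfl }
  rw [Fintype.card_congr (e2.trans e3), Fintype.card_fin]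

theorem count_functions (k : γ → ℕ) (hk : ∑ c, k c = Fintype.card α) :
    Fintype.card {F : α → γ // ∀ c, Fintype.card {i // F i = c} = k c}
      * ∏ c : γ, (k c).factorial = (Fintype.card α).factorial := by
  obtain ⟨F₀, hF₀⟩ := exists_fiber_fun (α := α) k hk
  have key : (Finset.univ : Finset (Equiv.Perm α)).card
      = ∑ F : α → γ,
          ((univ : Finset (Equiv.Perm α)).filter fun σ => (fun i => F₀ (σ i)) = F).card :=
    Finset.card_eq_sum_card_fiberwise (fun σ _ => mem_univ _)
  have hterm : ∀ F : α → γ,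
      ((univ : Finset (Equiv.Perm α)).filter fun σ => (fun i => F₀ (σ i)) = F).card
        = if (∀ c, Fintype.card {i // F i = c} = k c)
            then ∏ c : γ, (k c).factorial else 0 := by
    intro F
    have h1 : ((univ : Finset (Equiv.Perm α)).filter fun σ => (fun i => F₀ (σ i)) = F).card
        = Fintype.card {σ : Equiv.Perm α // ∀ i, F₀ (σ i) = F i} := by
      rw [Fintype.card_subtype]
      exact Finset.card_bij (fun σ _ => σ) (fun σ hσ => by
        simp only [mem_filter, mem_univ, true_and] at hσ ⊢
        exact fun i => congrFun hσ i) (fun _ _ _ _ h => h)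
        (fun σ hσ => ⟨σ, by
          simp only [mem_filter, mem_univ, true_and] at hσ ⊢
          exact ⟨funext hσ, trivial⟩⟩)
    rw [h1]
    by_cases hF : ∀ c, Fintype.card {i // F i = c} = k c
    · rw [if_pos hF, card_perm_comp F F₀ (fun c => by rw [hF c, hF₀ c])]
      exact Finset.prod_congr rfl fun c _ => by rw [hF₀ c]
    · rw [if_neg hF]
      push_neg at hF
      obtain ⟨c, hc⟩ := hF
      exact card_perm_comp_zero F F₀ c (by rw [hF₀ c]; exact hc)
  rw [Finset.card_univ, Fintype.card_perm] at key
  rw [Fintype.card_subtype, key, Finset.sum_congr rfl fun F _ => hterm F,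
    ← Finset.sum_filter, Finset.sum_const, smul_eq_mul]

end Auxiliary

section Steps

variable (S : Type*) [Fintype S] [DecidableEq S]

theorem step1lemma (N : ℕ) (k : S × S → ℕ)
    (kmarg : ∀ r : S, ∑ s : S, k (r, s) = ∑ s : S, k (s, r)) (R : Fin N → S) :
    Fintype.card {σ : Equiv.Perm (Fin N) //
        ∀ r s : S, (univ.filter fun i => R i = r ∧ R (σ i) = s).card = k (r, s)}
      = ((univ : Finset (Fin N → S)).filter fun T =>
          ∀ r s : S, (univ.filter fun i => R i = r ∧ T i = s).card = k (r, s)).card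
        * ∏ s : S, (∑ s' : S, k (s, s')).factorial := by
  rw [Fintype.card_subtype]
  rw [Finset.card_eq_sum_card_fiberwise
    (f := fun σ : Equiv.Perm (Fin N) => (fun i => R (σ i))) (t := univ) (fun σ _ => mem_univ _)]
  have hterm : ∀ T : Fin N → S,
      (((univ : Finset (Equiv.Perm (Fin N))).filter fun σ =>
          ∀ r s : S, (univ.filter fun i => R i = r ∧ R (σ i) = s).card = k (r, s)).filter
        fun σ => (fun i => R (σ i)) = T).card
      = if (∀ r s : S, (univ.filter fun i => R i = r ∧ T i = s).card = k (r, s))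
          then ∏ s : S, (∑ s' : S, k (s, s')).factorial else 0 := by
    intro T
    rw [Finset.filter_filter]
    by_cases hT : ∀ r s : S, (univ.filter fun i => R i = r ∧ T i = s).card = k (r, s)
    · rw [if_pos hT]
      have hfil : ((univ : Finset (Equiv.Perm (Fin N))).filter fun σ =>
            (∀ r s : S, (univ.filter fun i => R i = r ∧ R (σ i) = s).card = k (r, s))
              ∧ (fun i => R (σ i)) = T)
          = (univ.filter fun σ : Equiv.Perm (Fin N) => (fun i => R (σ i)) = T) := by
        apply Finset.filter_congr
        intro σ _
        constructor
        · exact And.right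
        · intro h
          refine ⟨fun r s => ?_, h⟩
          rw [← hT r s]
          congr 1
          ext i
          simp [mem_filter, congrFun h i]
      rw [hfil]
      have hcard : ((univ : Finset (Equiv.Perm (Fin N))).filter
            fun σ => (fun i => R (σ i)) = T).card
          = Fintype.card {σ : Equiv.Perm (Fin N) // ∀ i, R (σ i) = T i} := by
        rw [Fintype.card_subtype]
        congr 1
        ext σ
        simp [funext_iff]
      rw [hcard]
      have fibR : ∀ r : S, Fintype.card {i // R i = r} = ∑ s : S, k (r, s) := by
        intro r
        rw [Fintype.card_subtype,
          Finset.card_eq_sum_card_fiberwise (f := T) (t := univ) (fun i _ => mem_univ _)]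
        refine Finset.sum_congr rfl fun s _ => ?_
        rw [Finset.filter_filter]
        exact hT r s
      have fibT : ∀ s : S, Fintype.card {i // T i = s} = ∑ s' : S, k (s, s') := by
        intro s
        rw [Fintype.card_subtype,
          Finset.card_eq_sum_card_fiberwise (f := R) (t := univ) (fun i _ => mem_univ _), kmarg s]
        refine Finset.sum_congr rfl fun r _ => ?_
        rw [Finset.filter_filter, ← hT r s]
        congr 1
        ext i
        simp [mem_filter, and_comm]
      have h2 := (card_perm_comp T R (fun c => by rw [fibT c, fibR c])).trans
          (Finset.prod_congr rfl fun c _ => by rw [fibR c])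
      convert h2 using 2
    · rw [if_neg hT, Finset.card_eq_zero, Finset.filter_eq_empty_iff]
      rintro σ - ⟨hP, heq⟩
      apply hT
      intro r s
      rw [← hP r s]
      congr 1
      ext i
      simp [mem_filter, congrFun heq i]
  rw [Finset.sum_congr rfl fun T _ => hterm T, ← Finset.sum_filter, Finset.sum_const, smul_eq_mul]

theorem step2lemma (N : ℕ) (k : S × S → ℕ) :
    ∑ R : Fin N → S, ((univ : Finset (Fin N → S)).filter fun T =>
        ∀ r s : S, (univ.filter fun i => R i = r ∧ T i = s).card = k (r, s)).card
      = Fintype.card {F : Fin N → S × S // ∀ p : S × S, Fintype.card {i // F i = p} = k p} := by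
  have key : ∀ (q : (Fin N → S) × (Fin N → S)) (p : S × S),
      Fintype.card {i // (q.1 i, q.2 i) = p}
        = (univ.filter fun i => q.1 i = p.1 ∧ q.2 i = p.2).card := by
    intro q p
    rw [Fintype.card_subtype]
    congr 1
    ext i
    simp [Prod.ext_iff]
  calc ∑ R : Fin N → S, ((univ : Finset (Fin N → S)).filter fun T =>
        ∀ r s : S, (univ.filter fun i => R i = r ∧ T i = s).card = k (r, s)).card
      = ∑ R : Fin N → S, ∑ T : Fin N → S,
          if (∀ r s : S, (univ.filter fun i => R i = r ∧ T i = s).card = k (r, s))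
            then 1 else 0 := by
        exact Finset.sum_congr rfl fun R _ => Finset.card_filter _ _
    _ = ∑ q : (Fin N → S) × (Fin N → S),
          if (∀ r s : S, (univ.filter fun i => q.1 i = r ∧ q.2 i = s).card = k (r, s))
            then 1 else 0 := by
        rw [Fintype.sum_prod_type]
    _ = ((univ : Finset ((Fin N → S) × (Fin N → S))).filter fun q =>
          ∀ r s : S, (univ.filter fun i => q.1 i = r ∧ q.2 i = s).card = k (r, s)).card := by
        rw [Finset.card_filter]
    _ = Fintype.card {q : (Fin N → S) × (Fin N → S) //
          ∀ r s : S, (univ.filter fun i => q.1 i = r ∧ q.2 i = s).card = k (r, s)} :=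
        (Fintype.card_subtype _).symm
    _ = Fintype.card {F : Fin N → S × S // ∀ p : S × S, Fintype.card {i // F i = p} = k p} := by
        refine Fintype.card_congr (Equiv.subtypeEquiv
          (Equiv.arrowProdEquivProdArrow (Fin N) (fun _ => S) (fun _ => S)).symm ?_)
        intro q
        constructor
        · intro h p
          rw [show ((Equiv.arrowProdEquivProdArrow (Fin N) (fun _ => S) (fun _ => S)).symm q)
              = fun i => (q.1 i, q.2 i) from rfl, key q p]
          exact h p.1 p.2
        · intro h r s
          have := h (r, s)
          rw [show ((Equiv.arrowProdEquivProdArrow (Fin N) (fun _ => S) (fun _ => S)).symm q)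
              = fun i => (q.1 i, q.2 i) from rfl, key q (r, s)] at this
          exact this

end Steps

/-- Let `Σ` be finite and `η ∈ M₁^{s,N}(Σ²)`: a probability measure on
`Σ²` with equal marginals and `N·η(r,s) = k(r,s) ∈ ℕ` for all `r,s`.  For
`R = (r₁,…,r_N) ∈ Σ^N` let `Sym_N(R,η)` be the set of permutations `σ` with
`#{i : r_i = r, r_{σ(i)} = s} = N·η(r,s)` for all `r,s`.  Then
`∑_{R ∈ Σ^N} #Sym_N(R,η) = N! · (∏_r (N η̄(r))!) / (∏_{r,s} (N η(r,s))!)`. -/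
theorem statement2 (S : Type*) [Fintype S] [DecidableEq S] (N : ℕ) (hN : 0 < N)
    (η : S × S → ℝ) (k : S × S → ℕ)
    (hk : ∀ r s : S, (k (r, s) : ℝ) = N * η (r, s))
    (hprob : ∑ r : S, ∑ s : S, η (r, s) = 1)
    (hmarg : ∀ r : S, ∑ s : S, η (r, s) = ∑ s : S, η (s, r)) :
    (∑ R : Fin N → S,
        (Fintype.card {σ : Equiv.Perm (Fin N) //
          ∀ r s : S, (univ.filter fun i => R i = r ∧ R (σ i) = s).card = k (r, s)} : ℝ))
      = (N.factorial : ℝ) * (∏ r : S, ((∑ s : S, k (r, s)).factorial : ℝ))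
          / ∏ r : S, ∏ s : S, ((k (r, s)).factorial : ℝ) := by
  have hsumk : ∑ p : S × S, k p = N := by
    have : ((∑ p : S × S, k p : ℕ) : ℝ) = (N : ℝ) := by
      push_cast
      rw [Fintype.sum_prod_type]
      calc ∑ r : S, ∑ s : S, ((k (r, s) : ℝ)) = ∑ r : S, ∑ s : S, (N : ℝ) * η (r, s) := by
            simp_rw [hk]
        _ = (N : ℝ) * ∑ r : S, ∑ s : S, η (r, s) := by simp_rw [Finset.mul_sum]
        _ = N := by rw [hprob, mul_one]
    exact_mod_cast this
  have kmarg : ∀ r : S, ∑ s : S, k (r, s) = ∑ s : S, k (s, r) := by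
    intro r
    have : ((∑ s : S, k (r, s) : ℕ) : ℝ) = ((∑ s : S, k (s, r) : ℕ) : ℝ) := by
      push_cast; simp_rw [hk]; rw [← Finset.mul_sum, ← Finset.mul_sum, hmarg r]
    exact_mod_cast this
  have main : (∑ R : Fin N → S,
      Fintype.card {σ : Equiv.Perm (Fin N) //
        ∀ r s : S, (univ.filter fun i => R i = r ∧ R (σ i) = s).card = k (r, s)})
        * ∏ p : S × S, (k p).factorial
      = N.factorial * ∏ r : S, (∑ s : S, k (r, s)).factorial := by
    calc (∑ R : Fin N → S, Fintype.card {σ : Equiv.Perm (Fin N) //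
          ∀ r s : S, (univ.filter fun i => R i = r ∧ R (σ i) = s).card = k (r, s)})
          * ∏ p : S × S, (k p).factorial
        = ((∑ R : Fin N → S, ((univ : Finset (Fin N → S)).filter fun T =>
              ∀ r s : S, (univ.filter fun i => R i = r ∧ T i = s).card = k (r, s)).card)
            * ∏ s : S, (∑ s' : S, k (s, s')).factorial) * ∏ p : S × S, (k p).factorial := by
          rw [Finset.sum_congr rfl fun R _ => step1lemma S N k kmarg R, ← Finset.sum_mul]
      _ = (Fintype.card {F : Fin N → S × S // ∀ p : S × S, Fintype.card {i // F i = p} = k p}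
            * ∏ p : S × S, (k p).factorial) * ∏ s : S, (∑ s' : S, k (s, s')).factorial := by
          rw [step2lemma S N k]; ring
      _ = N.factorial * ∏ r : S, (∑ s : S, k (r, s)).factorial := by
          rw [count_functions k (by rw [hsumk, Fintype.card_fin]), Fintype.card_fin]
  have hne : (∏ r : S, ∏ s : S, ((k (r, s)).factorial : ℝ)) ≠ 0 := by
    positivity
  rw [eq_div_iff hne]
  have hprod : (∏ r : S, ∏ s : S, ((k (r, s)).factorial : ℝ))
      = ((∏ p : S × S, (k p).factorial : ℕ) : ℝ) := by
    push_cast [Fintype.prod_prod_type]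
    rfl
  rw [hprod]
  exact_mod_cast main
end

section
/- Let Σ_N be a finite set. Then for any probability measure η on Σ_N² with equal marginals such that there exists (r₀,s₀) with η(r₀,s₀) ≥ 2(#Σ_N)²/N, there exists a probability measure η_N on Σ_N² with equal marginals such that N·η_N(r,s) ∈ ℕ₀ for all r,s and max_{r,s} |η(r,s) − η_N(r,s)| ≤ 2(#Σ_N)²/N. -/
open Finset

set_option maxHeartbeats 1000000 in
/-- Let `Σ_N` be a finite set and `N ≥ 1`.  Let `η` be a probability
measure on `Σ_N²` with equal marginals, and assume there exists `(r₀,s₀)` with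
`η(r₀,s₀) ≥ 2(#Σ_N)²/N`.  Then there exists a probability measure `η_N` on `Σ_N²` with
equal marginals such that `N·η_N(r,s) ∈ ℕ₀` for all `r,s` and
`max_{r,s} |η(r,s) − η_N(r,s)| ≤ 2(#Σ_N)²/N`. -/
theorem statement4 (S : Type*) [Fintype S] [DecidableEq S] (N : ℕ) (hN : 0 < N)
    (η : S × S → ℝ)
    (hnonneg : ∀ p : S × S, 0 ≤ η p)
    (hprob : ∑ r : S, ∑ s : S, η (r, s) = 1)
    (hmarg : ∀ r : S, ∑ s : S, η (r, s) = ∑ s : S, η (s, r))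
    (hbig : ∃ r₀ s₀ : S, η (r₀, s₀) ≥ 2 * (Fintype.card S : ℝ) ^ 2 / N) :
    ∃ ηN : S × S → ℝ,
      (∀ p : S × S, 0 ≤ ηN p) ∧
      (∑ r : S, ∑ s : S, ηN (r, s) = 1) ∧
      (∀ r : S, ∑ s : S, ηN (r, s) = ∑ s : S, ηN (s, r)) ∧
      (∀ r s : S, ∃ m : ℕ, ηN (r, s) = (m : ℝ) / N) ∧
      (∀ r s : S, |η (r, s) - ηN (r, s)| ≤ 2 * (Fintype.card S : ℝ) ^ 2 / N) := by
  classical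
  obtain ⟨r₀, s₀, hbig⟩ := hbig
  have hkpos : 0 < Fintype.card S := Fintype.card_pos_iff.mpr ⟨r₀⟩
  set k : ℤ := (Fintype.card S : ℤ) with hkdef
  have hk1 : (1 : ℤ) ≤ k := by
    have h : 1 ≤ Fintype.card S := hkpos
    rw [hkdef]; exact_mod_cast h
  have hkR : ((k : ℝ)) = (Fintype.card S : ℝ) := by push_cast [hkdef]; ring
  have hNR : (0 : ℝ) < (N : ℝ) := by exact_mod_cast hN
  set M : S × S → ℤ := fun p => ⌊(N : ℝ) * η p⌋ with hMdef
  have hφ0 : ∀ p : S × S, (0 : ℝ) ≤ (N : ℝ) * η p - M p := fun p => sub_nonneg.mpr (Int.floor_le _)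
  have hφ1 : ∀ p : S × S, (N : ℝ) * η p - M p < 1 := fun p => by
    have := Int.lt_floor_add_one ((N : ℝ) * η p); simp only [hMdef]; linarith
  have hM0 : ∀ p : S × S, (0 : ℤ) ≤ M p := fun p =>
    Int.floor_nonneg.mpr (mul_nonneg (le_of_lt hNR) (hnonneg p))
  have hmargN : ∀ r : S, ∑ s, (N : ℝ) * η (r, s) = ∑ s, (N : ℝ) * η (s, r) := by
    intro r; rw [← Finset.mul_sum, ← Finset.mul_sum, hmarg]
  -- imbalance d
  set d : S → ℤ := fun r => (∑ s, M (s, r)) - ∑ s, M (r, s) with hddef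
  have hdcast : ∀ r : S,
      (d r : ℝ) = (∑ s, ((N : ℝ) * η (r, s) - M (r, s))) - ∑ s, ((N : ℝ) * η (s, r) - M (s, r)) := by
    intro r
    rw [Finset.sum_sub_distrib, Finset.sum_sub_distrib]
    have h := hmargN r
    push_cast [hddef]
    linarith
  have hrowφk : ∀ r : S, (∑ s, ((N : ℝ) * η (r, s) - M (r, s))) < k := by
    intro r
    calc (∑ s, ((N : ℝ) * η (r, s) - M (r, s))) < ∑ _s : S, (1 : ℝ) :=
          Finset.sum_lt_sum_of_nonempty ⟨r₀, mem_univ r₀⟩ (fun s _ => hφ1 (r, s))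
      _ = k := by simp [hkdef]
  have hcolφk : ∀ r : S, (∑ s, ((N : ℝ) * η (s, r) - M (s, r))) < k := by
    intro r
    calc (∑ s, ((N : ℝ) * η (s, r) - M (s, r))) < ∑ _s : S, (1 : ℝ) :=
          Finset.sum_lt_sum_of_nonempty ⟨r₀, mem_univ r₀⟩ (fun s _ => hφ1 (s, r))
      _ = k := by simp [hkdef]
  have hrowφ0 : ∀ r : S, (0 : ℝ) ≤ ∑ s, ((N : ℝ) * η (r, s) - M (r, s)) :=
    fun r => Finset.sum_nonneg fun s _ => hφ0 (r, s)
  have hcolφ0 : ∀ r : S, (0 : ℝ) ≤ ∑ s, ((N : ℝ) * η (s, r) - M (s, r)) :=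
    fun r => Finset.sum_nonneg fun s _ => hφ0 (s, r)
  have hdle : ∀ r : S, d r ≤ k - 1 := by
    intro r
    have : (d r : ℝ) < k := by rw [hdcast r]; have := hcolφ0 r; have := hrowφk r; linarith
    have : d r < k := by exact_mod_cast this
    omega
  have hdge : ∀ r : S, -(k - 1) ≤ d r := by
    intro r
    have : -(k : ℝ) < d r := by rw [hdcast r]; have := hrowφ0 r; have := hcolφk r; linarith
    have : -k < d r := by exact_mod_cast this
    omega
  have hsumd : ∑ r, d r = 0 := by
    simp only [hddef, Finset.sum_sub_distrib]
    rw [Finset.sum_comm]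
    ring
  set T : ℤ := ∑ r, max (d r) 0 with hTdef
  have hmaxsub : ∀ a : ℤ, max a 0 - max (-a) 0 = a := fun a => max_zero_sub_max_neg_zero_eq_self a
  have hdnegsum : ∑ r, max (-(d r)) 0 = T := by
    have h : ∑ r, (max (d r) 0 - max (-(d r)) 0) = 0 := by
      simp only [hmaxsub]; exact hsumd
    rw [Finset.sum_sub_distrib] at h
    omega
  -- total fractional mass
  set F : ℝ := ∑ r, ∑ s, ((N : ℝ) * η (r, s) - M (r, s)) with hFdef
  set SM : ℤ := ∑ r, ∑ s, M (r, s) with hSMdef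
  have hFSM : F = (N : ℝ) - SM := by
    have h1 : ∑ r, ∑ s, (N : ℝ) * η (r, s) = N := by
      have : ∑ r : S, ∑ s : S, (N : ℝ) * η (r, s) = (N : ℝ) * ∑ r : S, ∑ s : S, η (r, s) := by
        rw [Finset.mul_sum]; exact Finset.sum_congr rfl fun r _ => by rw [Finset.mul_sum]
      rw [this, hprob, mul_one]
    simp only [hFdef, hSMdef]
    push_cast
    simp only [Finset.sum_sub_distrib]
    rw [h1]
  have hF0 : (0 : ℝ) ≤ F := Finset.sum_nonneg fun r _ => hrowφ0 r
  have hFk : F ≤ (k : ℝ) ^ 2 := by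
    have : F ≤ ∑ _r : S, ∑ _s : S, (1 : ℝ) :=
      Finset.sum_le_sum fun r _ => Finset.sum_le_sum fun s _ => le_of_lt (hφ1 (r, s))
    simpa [hkdef, sq] using this
  have hT0 : (0 : ℤ) ≤ T := Finset.sum_nonneg fun r _ => le_max_right _ _
  have hTF : (T : ℝ) ≤ F := by
    have : ∀ r : S, ((max (d r) 0 : ℤ) : ℝ) ≤ ∑ s, ((N : ℝ) * η (r, s) - M (r, s)) := by
      intro r
      have h1 : (d r : ℝ) ≤ ∑ s, ((N : ℝ) * η (r, s) - M (r, s)) := by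
        rw [hdcast r]; have := hcolφ0 r; linarith
      have h2 := hrowφ0 r
      push_cast
      exact max_le h1 h2
    calc (T : ℝ) = ∑ r, ((max (d r) 0 : ℤ) : ℝ) := by push_cast [hTdef]; ring
      _ ≤ F := Finset.sum_le_sum fun r _ => this r
  have hTk : T ≤ k ^ 2 := by
    have : (T : ℝ) ≤ (k : ℝ) ^ 2 := le_trans hTF hFk
    exact_mod_cast this
  set u : ℤ := (N : ℤ) - SM - T with hudef
  have huF : (u : ℝ) = F - T := by rw [hFSM]; push_cast [hudef]; ring
  have hu0 : (0 : ℤ) ≤ u := by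
    have : (0 : ℝ) ≤ (u : ℝ) := by rw [huF]; linarith
    exact_mod_cast this
  have huk : u ≤ k ^ 2 := by
    have hT0R : (0:ℝ) ≤ (T:ℝ) := by exact_mod_cast hT0
    have : (u : ℝ) ≤ (k : ℝ) ^ 2 := by rw [huF]; linarith
    exact_mod_cast this
  have huT1 : -(k ^ 2) ≤ u - T := by
    have : -((k : ℝ) ^ 2) ≤ (u : ℝ) - T := by rw [huF]; linarith
    exact_mod_cast this
  have huT2 : u - T ≤ k ^ 2 := by
    have h : (0:ℝ) ≤ (T:ℝ) := by exact_mod_cast hT0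
    have : (u : ℝ) - T ≤ (k : ℝ) ^ 2 := by rw [huF]; linarith
    exact_mod_cast this
  have hMbig : 2 * k ^ 2 ≤ M (r₀, s₀) := by
    apply Int.le_floor.mpr
    have h : 2 * (Fintype.card S : ℝ) ^ 2 ≤ (N : ℝ) * η (r₀, s₀) := by
      rw [ge_iff_le, div_le_iff₀ hNR] at hbig
      linarith
    calc ((2 * k ^ 2 : ℤ) : ℝ) = 2 * (Fintype.card S : ℝ) ^ 2 := by push_cast [hkdef]; ring
      _ ≤ (N : ℝ) * η (r₀, s₀) := h
  -- the integer measure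
  set nn : S × S → ℤ := fun p =>
    M p + (if p.1 = r₀ then max (-(d p.2)) 0 else 0) +
      (if p.2 = s₀ then max (d p.1) 0 + (if p.1 = s₀ then u else 0) + (if p.1 = r₀ then -T else 0)
        else 0) with hnndef
  have hrow : ∀ r : S, ∑ s, nn (r, s) =
      (∑ s, M (r, s)) + max (d r) 0 + (if r = s₀ then u else 0) := by
    intro r
    simp only [hnndef]
    rw [Finset.sum_add_distrib, Finset.sum_add_distrib]
    have h1 : ∑ s, (if r = r₀ then max (-(d s)) 0 else 0) = if r = r₀ then T else 0 := by
      split <;> simp [hdnegsum]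
    have h2 : ∑ s : S, (if s = s₀ then
        max (d r) 0 + (if r = s₀ then u else 0) + (if r = r₀ then -T else 0) else 0)
        = max (d r) 0 + (if r = s₀ then u else 0) + (if r = r₀ then -T else 0) := by
      rw [Finset.sum_ite_eq' univ s₀]
      simp
    rw [h1, h2]
    split <;> ring
  have hcol : ∀ r : S, ∑ s, nn (s, r) =
      (∑ s, M (s, r)) + max (-(d r)) 0 + (if r = s₀ then u else 0) := by
    intro r
    simp only [hnndef]
    rw [Finset.sum_add_distrib, Finset.sum_add_distrib]
    have h1 : ∑ s : S, (if s = r₀ then max (-(d r)) 0 else 0) = max (-(d r)) 0 := by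
      rw [Finset.sum_ite_eq' univ r₀]; simp
    have h2 : ∑ s : S, (if r = s₀ then
        max (d s) 0 + (if s = s₀ then u else 0) + (if s = r₀ then -T else 0) else 0)
        = if r = s₀ then u else 0 := by
      split
      · rw [Finset.sum_add_distrib, Finset.sum_add_distrib, ← hTdef,
          Finset.sum_ite_eq' univ s₀, Finset.sum_ite_eq' univ r₀]
        simp
      · simp
    rw [h1, h2]
  have hmarg' : ∀ r : S, ∑ s, nn (r, s) = ∑ s, nn (s, r) := by
    intro r
    rw [hrow r, hcol r]
    have h := hmaxsub (d r)
    have : max (d r) 0 - max (-(d r)) 0 = (∑ s, M (s, r)) - ∑ s, M (r, s) := by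
      rw [h]
    omega
  have htot : ∑ r, ∑ s, nn (r, s) = N := by
    have h : ∑ r, ∑ s, nn (r, s)
        = ∑ r, ((∑ s, M (r, s)) + max (d r) 0 + (if r = s₀ then u else 0)) :=
      Finset.sum_congr rfl fun r _ => hrow r
    rw [h, Finset.sum_add_distrib, Finset.sum_add_distrib, Finset.sum_ite_eq' univ s₀]
    simp only [mem_univ, if_true]
    rw [← hSMdef, ← hTdef, hudef]
    ring
  have hdposle : ∀ r : S, max (d r) 0 ≤ k - 1 := fun r => max_le (hdle r) (by omega)
  have hdnegle : ∀ r : S, max (-(d r)) 0 ≤ k - 1 := fun r => max_le (by have := hdge r; omega) (by omega)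
  have hnn0 : ∀ p : S × S, 0 ≤ nn p := by
    rintro ⟨r, s⟩
    have hm := hM0 (r, s)
    have hm1 := hM0 (r₀, s)
    have hm3 := hM0 (r, s₀)
    have h1 : (0:ℤ) ≤ max (-(d s)) 0 := le_max_right _ _
    have h1' : (0:ℤ) ≤ max (-(d s₀)) 0 := le_max_right _ _
    have h2 : (0:ℤ) ≤ max (d r) 0 := le_max_right _ _
    have h2' : (0:ℤ) ≤ max (d r₀) 0 := le_max_right _ _
    have hm2 := hMbig
    have h3 := hTk
    have h4 := hu0
    have h5 := hT0
    simp only [hnndef]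
    by_cases hr : r = r₀ <;> by_cases hs : s = s₀ <;>
      simp only [hr, hs, if_true, if_false] <;>
      first
        | (split_ifs <;> linarith)
        | linarith
  -- deviation bound (integer part)
  have hdev : ∀ p : S × S, -(k ^ 2) ≤ nn p - M p ∧ nn p - M p ≤ (k - 1) + (k - 1) + k ^ 2 := by
    rintro ⟨r, s⟩
    have h1 : (0:ℤ) ≤ max (-(d s)) 0 := le_max_right _ _
    have h1' : (0:ℤ) ≤ max (-(d s₀)) 0 := le_max_right _ _
    have h2 : (0:ℤ) ≤ max (d r) 0 := le_max_right _ _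
    have h2' : (0:ℤ) ≤ max (d r₀) 0 := le_max_right _ _
    have h3 := hdnegle s
    have h3' := hdnegle s₀
    have h4 := hdposle r
    have h4' := hdposle r₀
    have hk2 : (0:ℤ) ≤ k ^ 2 := by positivity
    have h5 := hT0
    have h6 := hTk
    have h7 := hu0
    have h8 := huk
    have h9 := huT1
    have h10 := huT2
    simp only [hnndef]
    by_cases hr : r = r₀ <;> by_cases hs : s = s₀ <;>
      simp only [hr, hs, if_true, if_false] <;>
      first
        | (split_ifs <;> exact ⟨by linarith, by linarith⟩)
        | exact ⟨by linarith, by linarith⟩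
  -- the real measure
  refine ⟨fun p => (nn p : ℝ) / N, ?_, ?_, ?_, ?_, ?_⟩
  · intro p
    have : (0:ℝ) ≤ (nn p : ℝ) := by exact_mod_cast hnn0 p
    positivity
  · have h : ∑ r : S, ∑ s : S, ((nn (r, s) : ℝ) / N) = (∑ r : S, ∑ s : S, (nn (r, s) : ℝ)) / N := by
      rw [Finset.sum_div]
      exact Finset.sum_congr rfl fun r _ => by rw [Finset.sum_div]
    rw [h]
    have : (∑ r : S, ∑ s : S, (nn (r, s) : ℝ)) = (N : ℝ) := by exact_mod_cast congrArg (Int.cast : ℤ → ℝ) htot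
    rw [this, div_self (ne_of_gt hNR)]
  · intro r
    have h := hmarg' r
    have : (∑ s, (nn (r, s) : ℝ)) = ∑ s, (nn (s, r) : ℝ) := by exact_mod_cast congrArg (Int.cast : ℤ → ℝ) h
    rw [← Finset.sum_div, ← Finset.sum_div, this]
  · intro r s
    refine ⟨(nn (r, s)).toNat, ?_⟩
    have h : (((nn (r, s)).toNat : ℕ) : ℝ) = ((nn (r, s) : ℤ) : ℝ) := by
      exact_mod_cast congrArg (fun z : ℤ => (z : ℝ)) (Int.toNat_of_nonneg (hnn0 (r, s)))
    rw [h]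
  · intro r s
    obtain ⟨hlb, hub⟩ := hdev (r, s)
    have hφl := hφ0 (r, s)
    have hφu := hφ1 (r, s)
    have hlbR : -((k:ℝ) ^ 2) ≤ (nn (r, s) : ℝ) - M (r, s) := by exact_mod_cast hlb
    have hubR : (nn (r, s) : ℝ) - M (r, s) ≤ ((k:ℝ) - 1) + ((k:ℝ) - 1) + (k:ℝ) ^ 2 := by
      exact_mod_cast hub
    have hk1R : (1:ℝ) ≤ (k:ℝ) := by exact_mod_cast hk1
    have hkey : |(N : ℝ) * η (r, s) - nn (r, s)| ≤ 2 * (k : ℝ) ^ 2 := by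
      rw [abs_le]
      constructor
      · nlinarith [sq_nonneg ((k:ℝ) - 1)]
      · nlinarith [sq_nonneg ((k:ℝ) - 1)]
    have heq : η (r, s) - (nn (r, s) : ℝ) / N = ((N : ℝ) * η (r, s) - nn (r, s)) / N := by
      rw [sub_div, mul_div_cancel_left₀ _ (ne_of_gt hNR)]
    rw [heq, ← hkR, abs_div, abs_of_pos hNR]
    gcongr
end

section
/- Let q be a probability measure on ℝ^d × ℝ^d and define I^q(μ) = sup_{Φ ∈ C_b(C)} { ⟨Φ,μ⟩ − ∫∫ q(dx,dy) log E^β_{x,y}[e^{Φ(B)}] } for μ ∈ M_1(C). If I^q(μ) < ∞, then the joint distribution μ_{0,β} of the initial and terminal point under μ equals q. -/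
open MeasureTheory ENNReal

/-- The path space `C = C([0,β];ℝ^d)` with the topology of uniform convergence
(= compact-open topology, since `[0,β]` is compact). -/
abbrev BBPath (d : ℕ) (β : ℝ) := C(Set.Icc (0 : ℝ) β, EuclideanSpace ℝ (Fin d))

noncomputable instance (d : ℕ) (β : ℝ) : MeasurableSpace (BBPath d β) := borel _
instance (d : ℕ) (β : ℝ) : BorelSpace (BBPath d β) := ⟨rfl⟩

/-- Let `q` be a probability measure on `ℝ^d × ℝ^d` and, for
`μ ∈ M₁(C)`, let
`I^q(μ) = sup_{Φ ∈ C_b(C)} { ⟨Φ,μ⟩ − ∫∫ q(dx,dy) log E^β_{x,y}[e^{Φ(B)}] }`,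
where `ℙ^β_{x,y}` are the normalized Brownian bridge measures (probability measures on
`C` pinned at `x` and `y` at times `0` and `β`).  If `I^q(μ) < ∞` (i.e. the defining
expressions are bounded above by some `M`), then the joint initial–terminal distribution
`μ_{0,β} = μ ∘ (π_0,π_β)^{-1}` equals `q`. -/
theorem statement8 {d : ℕ} (β : ℝ) (hβ : 0 < β)
    (P : EuclideanSpace ℝ (Fin d) → EuclideanSpace ℝ (Fin d) → Measure (BBPath d β))
    (hPprob : ∀ x y, IsProbabilityMeasure (P x y))
    (hpin : ∀ x y, P x y
      {ω : BBPath d β | ω ⟨0, Set.left_mem_Icc.mpr hβ.le⟩ = x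
        ∧ ω ⟨β, Set.right_mem_Icc.mpr hβ.le⟩ = y} = 1)
    (q : Measure (EuclideanSpace ℝ (Fin d) × EuclideanSpace ℝ (Fin d)))
    [IsProbabilityMeasure q]
    (μ : Measure (BBPath d β)) [IsProbabilityMeasure μ]
    (M : ℝ)
    (hfin : ∀ Φ : BoundedContinuousFunction (BBPath d β) ℝ,
      (∫ ω, Φ ω ∂μ)
        - ∫ p, Real.log (∫ ω, Real.exp (Φ ω) ∂(P p.1 p.2)) ∂q ≤ M) :
    μ.map (fun ω : BBPath d β =>
        (ω ⟨0, Set.left_mem_Icc.mpr hβ.le⟩, ω ⟨β, Set.right_mem_Icc.mpr hβ.le⟩)) = q := by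
  classical
  set t0 : Set.Icc (0 : ℝ) β := ⟨0, Set.left_mem_Icc.mpr hβ.le⟩
  set t1 : Set.Icc (0 : ℝ) β := ⟨β, Set.right_mem_Icc.mpr hβ.le⟩
  have he : Continuous (fun ω : BBPath d β => (ω t0, ω t1)) :=
    (continuous_eval_const t0).prodMk (continuous_eval_const t1)
  set e : BBPath d β → (EuclideanSpace ℝ (Fin d)) × (EuclideanSpace ℝ (Fin d)) := fun ω => (ω t0, ω t1) with he_def
  set ν : Measure ((EuclideanSpace ℝ (Fin d)) × (EuclideanSpace ℝ (Fin d))) := μ.map e with hν_def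
  have hνprob : IsProbabilityMeasure ν := Measure.isProbabilityMeasure_map he.aemeasurable
  -- key: integrals of bounded continuous functions agree
  have key : ∀ g : BoundedContinuousFunction ((EuclideanSpace ℝ (Fin d)) × (EuclideanSpace ℝ (Fin d))) ℝ,
      ∫ p, g p ∂ν = ∫ p, g p ∂q := by
    intro g
    have hbound : ∀ c : ℝ, c * (∫ p, g p ∂ν - ∫ p, g p ∂q) ≤ M := by
      intro c
      set Φ : BoundedContinuousFunction (BBPath d β) ℝ :=
        c • (g.compContinuous ⟨e, he⟩) with hΦ
      have h1 : ∫ ω, Φ ω ∂μ = c * ∫ p, g p ∂ν := by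
        rw [hν_def, integral_map he.aemeasurable g.continuous.aestronglyMeasurable]
        simp only [hΦ, BoundedContinuousFunction.coe_smul, Pi.smul_apply, smul_eq_mul]
        rw [integral_const_mul]
        rfl
      have h2 : ∀ x y : EuclideanSpace ℝ (Fin d), ∫ ω, Real.exp (Φ ω) ∂(P x y) = Real.exp (c * g (x, y)) := by
        intro x y
        haveI := hPprob x y
        have hS : P x y {ω : BBPath d β | ω t0 = x ∧ ω t1 = y} = 1 := hpin x y
        have hSmeas : MeasurableSet {ω : BBPath d β | ω t0 = x ∧ ω t1 = y} := by
          have : {ω : BBPath d β | ω t0 = x ∧ ω t1 = y} = e ⁻¹' {(x, y)} := by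
            ext ω; simp [e, Prod.ext_iff]
          rw [this]
          exact (isClosed_singleton.preimage he).measurableSet
        have hae : ∀ᵐ ω ∂(P x y), Real.exp (Φ ω) = Real.exp (c * g (x, y)) := by
          have hcompl : P x y ({ω : BBPath d β | ω t0 = x ∧ ω t1 = y})ᶜ = 0 := by
            rw [measure_compl hSmeas (measure_ne_top _ _), hS, measure_univ]
            simp
          rw [Set.compl_setOf] at hcompl
          filter_upwards [(ae_iff).mpr hcompl] with ω hω
          obtain ⟨hx, hy⟩ := hω
          simp only [hΦ, BoundedContinuousFunction.coe_smul, Pi.smul_apply, smul_eq_mul]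
          congr 2
          show g (e ω) = g (x, y)
          rw [show e ω = (x, y) by simp [e, hx, hy]]
        rw [integral_congr_ae hae, integral_const]
        simp
      have h3 : ∫ p : (EuclideanSpace ℝ (Fin d)) × (EuclideanSpace ℝ (Fin d)), Real.log (∫ ω, Real.exp (Φ ω) ∂(P p.1 p.2)) ∂q
          = c * ∫ p, g p ∂q := by
        have : ∀ p : (EuclideanSpace ℝ (Fin d)) × (EuclideanSpace ℝ (Fin d)), Real.log (∫ ω, Real.exp (Φ ω) ∂(P p.1 p.2)) = c * g p := by
          intro p
          rw [h2 p.1 p.2, Real.log_exp]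
        rw [integral_congr_ae (Filter.Eventually.of_forall this)]
        exact integral_const_mul c _
      have := hfin Φ
      rw [h1, h3] at this
      linarith [this, mul_sub c (∫ p, g p ∂ν) (∫ p, g p ∂q)]
    by_contra hne
    set D := ∫ p, g p ∂ν - ∫ p, g p ∂q with hD
    have hD0 : D ≠ 0 := sub_ne_zero.mpr hne
    have := hbound ((M + 1) / D)
    rw [div_mul_cancel₀ _ hD0] at this
    linarith
  -- conclude equality of measures
  have : ν = q := by
    apply ext_of_forall_lintegral_eq_of_IsFiniteMeasure
    intro f
    set fr : BoundedContinuousFunction ((EuclideanSpace ℝ (Fin d)) × (EuclideanSpace ℝ (Fin d))) ℝ :=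
      BoundedContinuousFunction.comp (fun x : NNReal => (x : ℝ))
        (LipschitzWith.of_dist_le_mul (fun a b => by
          rw [NNReal.coe_one, one_mul, NNReal.dist_eq]; rfl)) f with hfr
    have h1 : (∫⁻ p, (f p : ℝ≥0∞) ∂ν).toReal = (∫⁻ p, (f p : ℝ≥0∞) ∂q).toReal := by
      rw [BoundedContinuousFunction.toReal_lintegral_coe_eq_integral,
        BoundedContinuousFunction.toReal_lintegral_coe_eq_integral]
      exact key fr
    exact (ENNReal.toReal_eq_toReal_iff'
      (f.lintegral_lt_top_of_nnreal ν).ne (f.lintegral_lt_top_of_nnreal q).ne).mp h1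
  exact this
end

section
/- Minimiser identification: if μ ∈ M_1(C) satisfies I^q(μ) = 0 for q = μ_{0,β}, i.e. sup_{Φ∈C_b(C)} ⟨μ, Φ − log E^β_{π_0,π_β}[e^{Φ(B)}]⟩ = 0, then μ = ∫∫ q(dx,dy) ℙ^β_{x,y} ∘ B^{-1}, i.e. μ is the q-mixture of normalized Brownian bridge laws. -/
open MeasureTheory ENNReal

/-- Auxiliary exponential bound: for `|x| ≤ 1`, `exp x ≤ 1 + x + x ^ 2`. -/
lemma aux_exp_le {x : ℝ} (hx : |x| ≤ 1) : Real.exp x ≤ 1 + x + x ^ 2 := by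
  have h := Real.exp_bound hx (n := 2) (by norm_num)
  have hsum : ∑ m ∈ Finset.range 2, x ^ m / m.factorial = 1 + x := by
    simp [Finset.sum_range_succ]
  rw [hsum] at h
  have h1 := (abs_sub_le_iff.1 h).1
  norm_num [Nat.factorial] at h1
  nlinarith [h1, sq_abs x, sq_nonneg x]

/-- Minimiser identification: let `μ ∈ M₁(C)` with joint
initial–terminal distribution `q = μ ∘ (π_0,π_β)^{-1}`, and let `ℙ^β_{x,y}` be the
normalized Brownian bridge measures (probability measures pinned at `x,y`).  If
`I^q(μ) = 0`, i.e. `sup_{Φ ∈ C_b(C)} ⟨μ, Φ − log E^β_{π_0,π_β}[e^{Φ(B)}]⟩ = 0`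
(equivalently, every such expression is `≤ 0`, the value `0` being attained at `Φ ≡ 0`),
then `μ = ∫∫ q(dx,dy) ℙ^β_{x,y} ∘ B^{-1}`, the `q`-mixture of bridge laws. -/
theorem statement18 {d : ℕ} (β : ℝ) (hβ : 0 < β)
    (P : EuclideanSpace ℝ (Fin d) → EuclideanSpace ℝ (Fin d) → Measure (BBPath d β))
    (hPprob : ∀ x y, IsProbabilityMeasure (P x y))
    (hPmeas : Measurable fun p : EuclideanSpace ℝ (Fin d) × EuclideanSpace ℝ (Fin d) =>
      P p.1 p.2)
    (hpin : ∀ x y, P x y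
      {ω : BBPath d β | ω ⟨0, Set.left_mem_Icc.mpr hβ.le⟩ = x
        ∧ ω ⟨β, Set.right_mem_Icc.mpr hβ.le⟩ = y} = 1)
    (μ : Measure (BBPath d β)) [IsProbabilityMeasure μ]
    (q : Measure (EuclideanSpace ℝ (Fin d) × EuclideanSpace ℝ (Fin d)))
    (hq : q = μ.map (fun ω : BBPath d β =>
      (ω ⟨0, Set.left_mem_Icc.mpr hβ.le⟩, ω ⟨β, Set.right_mem_Icc.mpr hβ.le⟩)))
    (hsup : ∀ Φ : BoundedContinuousFunction (BBPath d β) ℝ,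
      (∫ ω, Φ ω ∂μ)
        - ∫ p, Real.log (∫ ω, Real.exp (Φ ω) ∂(P p.1 p.2)) ∂q ≤ 0) :
    μ = q.bind fun p => P p.1 p.2 := by
  classical
  -- `P` as a Markov kernel
  let κ : ProbabilityTheory.Kernel ((EuclideanSpace ℝ (Fin d) × EuclideanSpace ℝ (Fin d))) (BBPath d β) := ⟨fun p => P p.1 p.2, hPmeas⟩
  haveI : ProbabilityTheory.IsMarkovKernel κ := ⟨fun p => hPprob p.1 p.2⟩
  -- `q` is a probability measure
  have hpinmeas : Measurable fun ω : BBPath d β =>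
      (ω ⟨0, Set.left_mem_Icc.mpr hβ.le⟩, ω ⟨β, Set.right_mem_Icc.mpr hβ.le⟩) :=
    ((continuous_eval_const _).prodMk
      (continuous_eval_const _)).measurable
  haveI hqprob : IsProbabilityMeasure q := by
    rw [hq]; exact Measure.isProbabilityMeasure_map hpinmeas.aemeasurable
  -- measurability of parametrized integrals
  have hSM : ∀ g : BBPath d β → ℝ, Continuous g →
      StronglyMeasurable fun p : (EuclideanSpace ℝ (Fin d) × EuclideanSpace ℝ (Fin d)) => ∫ ω, g ω ∂(P p.1 p.2) := by
    intro g hg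
    exact MeasureTheory.StronglyMeasurable.integral_kernel_prod_right' (κ := κ)
      (f := fun x : ((EuclideanSpace ℝ (Fin d) × EuclideanSpace ℝ (Fin d))) × BBPath d β => g x.2)
      ((hg.comp continuous_snd).stronglyMeasurable)
  -- integrability of the mixture integrals of a bounded continuous function
  have hGint : ∀ Φ : BoundedContinuousFunction (BBPath d β) ℝ,
      (∀ p : (EuclideanSpace ℝ (Fin d) × EuclideanSpace ℝ (Fin d)), |∫ ω, Φ ω ∂(P p.1 p.2)| ≤ ‖Φ‖) ∧
      Integrable (fun p : (EuclideanSpace ℝ (Fin d) × EuclideanSpace ℝ (Fin d)) => ∫ ω, Φ ω ∂(P p.1 p.2)) q := by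
    intro Φ
    have hbd : ∀ p : (EuclideanSpace ℝ (Fin d) × EuclideanSpace ℝ (Fin d)), |∫ ω, Φ ω ∂(P p.1 p.2)| ≤ ‖Φ‖ := by
      intro p
      haveI := hPprob p.1 p.2
      rw [← Real.norm_eq_abs]
      calc ‖∫ ω, Φ ω ∂(P p.1 p.2)‖ ≤ ∫ ω, ‖Φ ω‖ ∂(P p.1 p.2) :=
            norm_integral_le_integral_norm _
        _ ≤ ∫ _, ‖Φ‖ ∂(P p.1 p.2) := by
            refine integral_mono (Φ.integrable _).norm (integrable_const _) fun ω => ?_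
            exact Φ.norm_coe_le_norm ω
        _ = ‖Φ‖ := by simp
    refine ⟨hbd, ?_⟩
    refine Integrable.mono' (integrable_const ‖Φ‖)
      (hSM _ Φ.continuous).aestronglyMeasurable ?_
    exact Filter.Eventually.of_forall fun p => by
      simpa [Real.norm_eq_abs] using hbd p
  -- the key identity: `μ` and the mixture integrate all bounded continuous functions equally
  have key : ∀ Φ : BoundedContinuousFunction (BBPath d β) ℝ,
      ∫ ω, Φ ω ∂μ = ∫ p, ∫ ω, Φ ω ∂(P p.1 p.2) ∂q := by
    have le : ∀ Φ : BoundedContinuousFunction (BBPath d β) ℝ,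
        ∫ ω, Φ ω ∂μ ≤ ∫ p, ∫ ω, Φ ω ∂(P p.1 p.2) ∂q := by
      intro Φ
      set M : ℝ := ‖Φ‖ + 1 with hM
      have hM0 : 0 < M := by positivity
      have hΦle : ∀ ω, |Φ ω| ≤ M := fun ω => by
        have := Φ.norm_coe_le_norm ω
        rw [Real.norm_eq_abs] at this; linarith
      set G : (EuclideanSpace ℝ (Fin d) × EuclideanSpace ℝ (Fin d)) → ℝ := fun p => ∫ ω, Φ ω ∂(P p.1 p.2) with hGdef
      have hGbd : ∀ p, |G p| ≤ M := fun p => le_trans ((hGint Φ).1 p) (by linarith)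
      have hGq : Integrable G q := (hGint Φ).2
      have step : ∀ t : ℝ, 0 < t → t * M ≤ 1 →
          ∫ ω, Φ ω ∂μ ≤ (∫ p, G p ∂q) + t * M ^ 2 := by
        intro t ht htM
        have h1 := hsup (t • Φ)
        rw [sub_nonpos] at h1
        have hsmul : ∫ ω, (t • Φ) ω ∂μ = t * ∫ ω, Φ ω ∂μ := by
          simp only [BoundedContinuousFunction.coe_smul, Pi.smul_apply, smul_eq_mul]
          exact integral_const_mul t _
        -- pointwise bound on each path-space exponential integral
        have hb : ∀ ω, |t * Φ ω| ≤ t * M := by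
          intro ω
          rw [abs_mul, abs_of_pos ht]
          exact mul_le_mul_of_nonneg_left (hΦle ω) ht.le
        have hexpC : Continuous fun ω : BBPath d β => Real.exp (t * Φ ω) :=
          Real.continuous_exp.comp (continuous_const.mul Φ.continuous)
        have hEint : ∀ p : (EuclideanSpace ℝ (Fin d) × EuclideanSpace ℝ (Fin d)),
            Integrable (fun ω => Real.exp (t * Φ ω)) (P p.1 p.2) := by
          intro p
          haveI := hPprob p.1 p.2
          refine Integrable.mono' (integrable_const (Real.exp (t * M)))
            hexpC.measurable.aestronglyMeasurable ?_
          refine Filter.Eventually.of_forall fun ω => ?_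
          rw [Real.norm_eq_abs, abs_of_pos (Real.exp_pos _)]
          exact Real.exp_le_exp.mpr (le_trans (le_abs_self _) (hb ω))
        have hEpos : ∀ p : (EuclideanSpace ℝ (Fin d) × EuclideanSpace ℝ (Fin d)), 0 < ∫ ω, Real.exp (t * Φ ω) ∂(P p.1 p.2) := by
          intro p
          haveI := hPprob p.1 p.2
          have : Real.exp (-(t * M)) ≤ ∫ ω, Real.exp (t * Φ ω) ∂(P p.1 p.2) := by
            calc Real.exp (-(t * M)) = ∫ _, Real.exp (-(t * M)) ∂(P p.1 p.2) := by simp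
              _ ≤ ∫ ω, Real.exp (t * Φ ω) ∂(P p.1 p.2) := by
                  refine integral_mono (integrable_const _) (hEint p) fun ω => ?_
                  exact Real.exp_le_exp.mpr (neg_le_of_abs_le (hb ω))
          exact lt_of_lt_of_le (Real.exp_pos _) this
        have hlog_bd : ∀ p : (EuclideanSpace ℝ (Fin d) × EuclideanSpace ℝ (Fin d)),
            Real.log (∫ ω, Real.exp (t * Φ ω) ∂(P p.1 p.2)) ≤ t * G p + (t * M) ^ 2 := by
          intro p
          haveI := hPprob p.1 p.2
          have hpt : ∀ ω, Real.exp (t * Φ ω) ≤ 1 + t * Φ ω + (t * M) ^ 2 := by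
            intro ω
            have hx1 : |t * Φ ω| ≤ 1 := (hb ω).trans htM
            have h := aux_exp_le hx1
            have : (t * Φ ω) ^ 2 ≤ (t * M) ^ 2 := by
              rw [← sq_abs (t * Φ ω)]
              exact pow_le_pow_left₀ (abs_nonneg _) (hb ω) 2
            linarith
          have hup : ∫ ω, Real.exp (t * Φ ω) ∂(P p.1 p.2) ≤ 1 + t * G p + (t * M) ^ 2 := by
            calc ∫ ω, Real.exp (t * Φ ω) ∂(P p.1 p.2)
                ≤ ∫ ω, (1 + t * Φ ω + (t * M) ^ 2) ∂(P p.1 p.2) := by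
                  refine integral_mono (hEint p) ?_ hpt
                  exact (((integrable_const (1 : ℝ)).add
                    ((Φ.integrable _).const_mul t)).add (integrable_const _))
              _ = 1 + t * G p + (t * M) ^ 2 := by
                  have hre : (fun ω : BBPath d β => 1 + t * Φ ω + (t * M) ^ 2)
                      = fun ω => t * Φ ω + (1 + (t * M) ^ 2) := by funext ω; ring
                  rw [hre, integral_add ((Φ.integrable _).const_mul t) (integrable_const _),
                    integral_const_mul, integral_const]
                  simp only [measure_univ, probReal_univ, ENNReal.toReal_one, smul_eq_mul, one_mul]
                  rw [show (∫ ω, Φ ω ∂(P p.1 p.2)) = G p from rfl]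
                  ring
          calc Real.log (∫ ω, Real.exp (t * Φ ω) ∂(P p.1 p.2))
              ≤ (∫ ω, Real.exp (t * Φ ω) ∂(P p.1 p.2)) - 1 :=
                Real.log_le_sub_one_of_pos (hEpos p)
            _ ≤ t * G p + (t * M) ^ 2 := by linarith
        -- the log term is bounded and measurable, hence integrable
        have hlogSM : StronglyMeasurable
            (fun p : (EuclideanSpace ℝ (Fin d) × EuclideanSpace ℝ (Fin d)) => Real.log (∫ ω, Real.exp (t * Φ ω) ∂(P p.1 p.2))) :=
          (Real.measurable_log.comp (hSM _ hexpC).measurable).stronglyMeasurable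
        have hlog_abs : ∀ p : (EuclideanSpace ℝ (Fin d) × EuclideanSpace ℝ (Fin d)),
            |Real.log (∫ ω, Real.exp (t * Φ ω) ∂(P p.1 p.2))| ≤ t * M := by
          intro p
          haveI := hPprob p.1 p.2
          have hup : ∫ ω, Real.exp (t * Φ ω) ∂(P p.1 p.2) ≤ Real.exp (t * M) := by
            calc ∫ ω, Real.exp (t * Φ ω) ∂(P p.1 p.2)
                ≤ ∫ _, Real.exp (t * M) ∂(P p.1 p.2) := by
                  refine integral_mono (hEint p) (integrable_const _) fun ω => ?_
                  exact Real.exp_le_exp.mpr (le_trans (le_abs_self _) (hb ω))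
              _ = Real.exp (t * M) := by simp
          have hlo : Real.exp (-(t * M)) ≤ ∫ ω, Real.exp (t * Φ ω) ∂(P p.1 p.2) := by
            calc Real.exp (-(t * M)) = ∫ _, Real.exp (-(t * M)) ∂(P p.1 p.2) := by simp
              _ ≤ ∫ ω, Real.exp (t * Φ ω) ∂(P p.1 p.2) := by
                  refine integral_mono (integrable_const _) (hEint p) fun ω => ?_
                  exact Real.exp_le_exp.mpr (neg_le_of_abs_le (hb ω))
          rw [abs_le]
          constructor
          · have := Real.log_le_log (Real.exp_pos _) hlo
            rwa [Real.log_exp] at this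
          · have := Real.log_le_log (hEpos p) hup
            rwa [Real.log_exp] at this
        have hlogint : Integrable
            (fun p : (EuclideanSpace ℝ (Fin d) × EuclideanSpace ℝ (Fin d)) => Real.log (∫ ω, Real.exp (t * Φ ω) ∂(P p.1 p.2))) q := by
          refine Integrable.mono' (integrable_const (t * M))
            hlogSM.aestronglyMeasurable ?_
          exact Filter.Eventually.of_forall fun p => by
            simpa [Real.norm_eq_abs] using hlog_abs p
        -- integrate the pointwise bound
        have h2 : ∫ p, Real.log (∫ ω, Real.exp (t * Φ ω) ∂(P p.1 p.2)) ∂q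
            ≤ ∫ p, (t * G p + (t * M) ^ 2) ∂q := by
          refine integral_mono hlogint ?_ hlog_bd
          exact (hGq.const_mul t).add (integrable_const _)
        have h3 : ∫ p, (t * G p + (t * M) ^ 2) ∂q = t * (∫ p, G p ∂q) + (t * M) ^ 2 := by
          rw [integral_add (hGq.const_mul t) (integrable_const _), integral_const_mul]
          simp
        have hsmul' : ∀ ω, (t • Φ) ω = t * Φ ω := fun ω => rfl
        have h1' : t * (∫ ω, Φ ω ∂μ)
            ≤ ∫ p, Real.log (∫ ω, Real.exp (t * Φ ω) ∂(P p.1 p.2)) ∂q := by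
          calc t * (∫ ω, Φ ω ∂μ) = ∫ ω, (t • Φ) ω ∂μ := hsmul.symm
            _ ≤ ∫ p, Real.log (∫ ω, Real.exp ((t • Φ) ω) ∂(P p.1 p.2)) ∂q := h1
            _ = ∫ p, Real.log (∫ ω, Real.exp (t * Φ ω) ∂(P p.1 p.2)) ∂q := by
                simp only [hsmul']
        have h4 : t * (∫ ω, Φ ω ∂μ) ≤ t * ((∫ p, G p ∂q) + t * M ^ 2) := by
          have : t * ((∫ p, G p ∂q) + t * M ^ 2) = t * (∫ p, G p ∂q) + (t * M) ^ 2 := by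
            ring
          rw [this]
          exact le_trans h1' (le_trans h2 (le_of_eq h3))
        exact (mul_le_mul_iff_right₀ ht).mp h4
      -- let `t → 0⁺`
      refine le_of_forall_pos_le_add fun ε hε => ?_
      set t : ℝ := min (ε / M ^ 2) M⁻¹ with htdef
      have ht : 0 < t := lt_min (by positivity) (by positivity)
      have h1 : t * M ≤ 1 := by
        have h : t ≤ M⁻¹ := min_le_right _ _
        calc t * M ≤ M⁻¹ * M := mul_le_mul_of_nonneg_right h hM0.le
          _ = 1 := inv_mul_cancel₀ hM0.ne'
      have h2 : t * M ^ 2 ≤ ε := by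
        have h : t ≤ ε / M ^ 2 := min_le_left _ _
        calc t * M ^ 2 ≤ (ε / M ^ 2) * M ^ 2 :=
              mul_le_mul_of_nonneg_right h (by positivity)
          _ = ε := div_mul_cancel₀ _ (by positivity)
      exact (step t ht h1).trans (by linarith)
    intro Φ
    have h1 := le Φ
    have h2 := le (-Φ)
    have h2' : -∫ ω, Φ ω ∂μ ≤ -∫ p, ∫ ω, Φ ω ∂(P p.1 p.2) ∂q := by
      have e1 : ∫ ω, (-Φ) ω ∂μ = -∫ ω, Φ ω ∂μ := by
        simp [integral_neg]
      have e2 : ∫ p, ∫ ω, (-Φ) ω ∂(P p.1 p.2) ∂q = -∫ p, ∫ ω, Φ ω ∂(P p.1 p.2) ∂q := by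
        simp [integral_neg]
      rw [e1, e2] at h2
      exact h2
    linarith
  -- conclude equality of measures via bounded continuous test functions
  refine ext_of_forall_lintegral_eq_of_IsFiniteMeasure fun f => ?_
  -- the real-valued version of `f`
  let ω₀ : BBPath d β := ContinuousMap.const _ 0
  obtain ⟨c, hc⟩ := f.bounded
  have hbd : ∀ ω, ‖(f ω : ℝ)‖ ≤ (f ω₀ : ℝ) + c := by
    intro ω
    rw [Real.norm_eq_abs, abs_of_nonneg (f ω).coe_nonneg]
    have h := hc ω ω₀
    rw [NNReal.dist_eq] at h
    have := (abs_sub_le_iff.1 h).1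
    linarith
  let Φ : BoundedContinuousFunction (BBPath d β) ℝ :=
    BoundedContinuousFunction.ofNormedAddCommGroup (fun ω => (f ω : ℝ))
      (NNReal.continuous_coe.comp f.continuous) ((f ω₀ : ℝ) + c) hbd
  have hΦ : ∀ ω, Φ ω = (f ω : ℝ) := fun ω => rfl
  have hΦnn : ∀ ω, 0 ≤ Φ ω := fun ω => (f ω).coe_nonneg
  have hΦf : ∀ ω, ((f ω : ℝ≥0∞)) = ENNReal.ofReal (Φ ω) := fun ω => by
    rw [hΦ, ENNReal.ofReal_coe_nnreal]
  have lhs : ∫⁻ ω, (f ω : ℝ≥0∞) ∂μ = ENNReal.ofReal (∫ ω, Φ ω ∂μ) := by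
    simp_rw [hΦf]
    exact (ofReal_integral_eq_lintegral_ofReal (Φ.integrable μ)
      (Filter.Eventually.of_forall hΦnn)).symm
  have hper : ∀ p : (EuclideanSpace ℝ (Fin d) × EuclideanSpace ℝ (Fin d)),
      ∫⁻ ω, (f ω : ℝ≥0∞) ∂(P p.1 p.2) = ENNReal.ofReal (∫ ω, Φ ω ∂(P p.1 p.2)) := by
    intro p
    haveI := hPprob p.1 p.2
    simp_rw [hΦf]
    exact (ofReal_integral_eq_lintegral_ofReal (Φ.integrable _)
      (Filter.Eventually.of_forall hΦnn)).symm
  have rhs : ∫⁻ ω, (f ω : ℝ≥0∞) ∂(q.bind fun p => P p.1 p.2)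
      = ENNReal.ofReal (∫ p, ∫ ω, Φ ω ∂(P p.1 p.2) ∂q) := by
    rw [Measure.lintegral_bind hPmeas.aemeasurable f.continuous.measurable.coe_nnreal_ennreal.aemeasurable]
    simp_rw [hper]
    exact (ofReal_integral_eq_lintegral_ofReal (hGint Φ).2
      (Filter.Eventually.of_forall fun p => integral_nonneg hΦnn)).symm
  rw [lhs, rhs, key Φ]
end
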